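/- Let u(x) be a formal power series over a commutative ring with u(0) = 1, and let G(x,y) = Σ g_{i,j} x^i y^j be a formal power series in two variables. For each n, let [G]_n denote the determinant of the n×n matrix (g_{i,j})_{0≤i,j≤n-1}. Then [u(x)·G(x,y)]_n = [G(x,y)]_n for all n. -/

import Mathlib

/-!
Row `i` of the coefficient matrix of `u(x) G(x,y)` is `∑_{k ≤ i} u_{i-k} · (row k of G)`, so that
matrix is the lower triangular Toeplitz matrix of `u` times the coefficient matrix of `G`; its
diagonal is `u(0) = 1`, so the determinant is unchanged.
-/

namespace PowerSeries

variable {R : Type*} [CommSemiring R]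

noncomputable def coeffMatrix (G : R⟦X⟧⟦X⟧) (n : ℕ) : Matrix (Fin n) (Fin n) R :=
  Matrix.of fun i j => coeff (j : ℕ) (coeff (i : ℕ) G)

noncomputable def lowerToeplitz (u : R⟦X⟧) (n : ℕ) : Matrix (Fin n) (Fin n) R :=
  Matrix.of fun i k => if k ≤ i then coeff (i - k : ℕ) u else 0

theorem coeff_coeff_map_C_mul (u : R⟦X⟧) (G : R⟦X⟧⟦X⟧) (i j : ℕ) :
    coeff j (coeff i (map C u * G)) =
      ∑ k ∈ Finset.range (i + 1), coeff (i - k) u * coeff j (coeff k G) := by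
  rw [mul_comm, coeff_mul,
    Finset.Nat.sum_antidiagonal_eq_sum_range_succ (fun a b => coeff a G * coeff b (map C u)),
    map_sum]
  simp [coeff_map, mul_comm]

theorem coeffMatrix_map_C_mul (u : R⟦X⟧) (G : R⟦X⟧⟦X⟧) (n : ℕ) :
    coeffMatrix (map C u * G) n = lowerToeplitz u n * coeffMatrix G n := by
  ext i j
  simp only [coeffMatrix, lowerToeplitz, Matrix.mul_apply, Matrix.of_apply, ite_mul, zero_mul,
    coeff_coeff_map_C_mul]
  rw [← Finset.sum_filter, Finset.filter_ge_eq_Iic, Nat.range_succ_eq_Iic,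
    ← Fin.map_valEmbedding_Iic, Finset.sum_map]
  rfl

theorem det_lowerToeplitz {R : Type*} [CommRing R] (u : R⟦X⟧) (n : ℕ) :
    (lowerToeplitz u n).det = constantCoeff u ^ n := by
  rw [Matrix.det_of_isLowerTriangular (lowerToeplitz u n) fun i k hik => if_neg (not_le.mpr hik)]
  simp [lowerToeplitz]

end PowerSeries

open PowerSeries

/-- Gessel–Xin product rule: a bivariate power series `G(x,y)` is encoded as an
element of `PowerSeries (PowerSeries R)` (outer variable `x`, inner variable `y`),
with coefficient `g_{i,j}` given by `coeff j (coeff i G)`.  Multiplying `G` by a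
univariate series `u(x)` with `u(0) = 1` does not change the determinant
`[G]_n = det (g_{i,j})_{0 ≤ i,j ≤ n-1}`. -/
theorem stmt7 {R : Type*} [CommRing R] (u : PowerSeries R)
    (hu : PowerSeries.constantCoeff (R := R) u = 1)
    (G : PowerSeries (PowerSeries R)) (n : ℕ) :
    Matrix.det (Matrix.of fun i j : Fin n =>
        PowerSeries.coeff (R := R) (j : ℕ)
          (PowerSeries.coeff (R := PowerSeries R) (i : ℕ)
            (PowerSeries.map (PowerSeries.C (R := R)) u * G)))
      = Matrix.det (Matrix.of fun i j : Fin n =>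
        PowerSeries.coeff (R := R) (j : ℕ) (PowerSeries.coeff (R := PowerSeries R) (i : ℕ) G)) := by
  change (coeffMatrix (map C u * G) n).det = (coeffMatrix G n).det
  rw [coeffMatrix_map_C_mul, Matrix.det_mul, det_lowerToeplitz, hu, one_pow, one_mul]
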